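/- arXiv:2403.07399 — 6 statements merged into one kernel-verified Lean document; each statement's English description precedes it below -/
import Mathlib

section
/- There is no integer vector (x, z, y) such that 4(x² + xy − y²) − 2z² = −10. -/
lemma mod25 : ∀ x z y : ZMod 25, 4 * (x ^ 2 + x * y - y ^ 2) - 2 * z ^ 2 ≠ -10 := by
  decide

/-- There is no integer vector `(x, z, y)` such that
`4(x² + xy − y²) − 2z² = −10`. -/
theorem no_square_minus_ten :
    ¬ ∃ x z y : ℤ, 4 * (x ^ 2 + x * y - y ^ 2) - 2 * z ^ 2 = -10 := by
  rintro ⟨x, z, y, h⟩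
  have := mod25 (x : ZMod 25) (z : ZMod 25) (y : ZMod 25)
  apply this
  have : ((4 * (x ^ 2 + x * y - y ^ 2) - 2 * z ^ 2 : ℤ) : ZMod 25) = ((-10 : ℤ) : ZMod 25) := by
    rw [h]
  push_cast at this
  exact this
end

section
/- The 3×3 integer matrix A = [[3,2,2],[−4,−3,−2],[0,0,−1]] satisfies A² = I and preserves the quadratic form q(x,λ,y) = 4(x² + xy − y²) − 2λ², i.e., q(A·v) = q(v) for all v ∈ ℤ³. -/
/-- The matrix `A = [[3,2,2],[−4,−3,−2],[0,0,−1]]` is an involution and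
preserves the quadratic form `q(x,λ,y) = 4(x² + xy − y²) − 2λ²`. -/
theorem iota0_involution_isometry :
    let A : Matrix (Fin 3) (Fin 3) ℤ := !![3, 2, 2; -4, -3, -2; 0, 0, -1]
    let q : (Fin 3 → ℤ) → ℤ :=
      fun v => 4 * ((v 0) ^ 2 + v 0 * v 2 - (v 2) ^ 2) - 2 * (v 1) ^ 2
    A * A = 1 ∧ ∀ v : Fin 3 → ℤ, q (A.mulVec v) = q v := by
  intro A q
  constructor
  · ext i j
    fin_cases i <;> fin_cases j <;>
      simp [A, Matrix.mul_apply, Fin.sum_univ_succ]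
  · intro v
    simp [A, q, Matrix.mulVec, dotProduct, Fin.sum_univ_three]
    ring
end

section
/- The 3×3 integer matrix C = [[27,4,−16],[−14,−3,8],[42,6,−25]] satisfies C² = I and preserves the quadratic form q(x,λ,y) = 4(x² + xy − y²) − 2λ². -/
/-- The matrix `C = [[27,4,−16],[−14,−3,8],[42,6,−25]]` is an involution and
preserves the quadratic form `q(x,λ,y) = 4(x² + xy − y²) − 2λ²`. -/
theorem iota2_involution_isometry :
    let C : Matrix (Fin 3) (Fin 3) ℤ := !![27, 4, -16; -14, -3, 8; 42, 6, -25]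
    let q : (Fin 3 → ℤ) → ℤ :=
      fun v => 4 * ((v 0) ^ 2 + v 0 * v 2 - (v 2) ^ 2) - 2 * (v 1) ^ 2
    C * C = 1 ∧ ∀ v : Fin 3 → ℤ, q (C.mulVec v) = q v := by
  intro C q
  constructor
  · ext i j
    fin_cases i <;> fin_cases j <;>
      simp [C, Matrix.mul_apply, Fin.sum_univ_three]
  · intro v
    simp only [C, q, Matrix.mulVec, dotProduct, Fin.sum_univ_three,
      Matrix.cons_val', Matrix.cons_val_zero, Matrix.cons_val_one, Matrix.head_cons,
      Matrix.empty_val', Matrix.cons_val_fin_one, Matrix.head_fin_const,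
      Matrix.cons_val_two, Matrix.tail_cons, Matrix.cons_val_succ, Matrix.of_apply]
    ring
end

section
/- The matrix M = [[5,0,8],[0,1,0],[8,0,13]] fixes the two vectors ((−1+√5)/2, 0, 1) and (−(1+√5)/2, 0, 1) in ℝ³, in the sense that for each such v, M·v is a positive scalar multiple of v, and both fixed vectors v satisfy q(v) = 4(v₁² + v₁v₃ − v₃²) − 2v₂² = 0. -/
/-- `M = [[5,0,8],[0,1,0],[8,0,13]]` sends each of the vectors
`((−1+√5)/2, 0, 1)` and `(−(1+√5)/2, 0, 1)` to a positive scalar multiple of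
itself, and both vectors are isotropic for `q(v) = 4(v₁² + v₁v₃ − v₃²) − 2v₂²`. -/
theorem fixed_rays_isotropic :
    let M : Matrix (Fin 3) (Fin 3) ℝ := !![5, 0, 8; 0, 1, 0; 8, 0, 13]
    let q : (Fin 3 → ℝ) → ℝ :=
      fun v => 4 * ((v 0) ^ 2 + v 0 * v 2 - (v 2) ^ 2) - 2 * (v 1) ^ 2
    let v₁ : Fin 3 → ℝ := ![(-1 + Real.sqrt 5) / 2, 0, 1]
    let v₂ : Fin 3 → ℝ := ![-(1 + Real.sqrt 5) / 2, 0, 1]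
    (∃ c : ℝ, 0 < c ∧ M.mulVec v₁ = c • v₁) ∧
    (∃ c : ℝ, 0 < c ∧ M.mulVec v₂ = c • v₂) ∧
    q v₁ = 0 ∧ q v₂ = 0 := by
  intro M q v₁ v₂
  have h5 : Real.sqrt 5 ^ 2 = 5 := Real.sq_sqrt (by norm_num)
  have hpos : (0:ℝ) < Real.sqrt 5 := Real.sqrt_pos.mpr (by norm_num)
  have hlt : Real.sqrt 5 < 3 := by
    nlinarith [h5, hpos]
  refine ⟨⟨9 + 4 * Real.sqrt 5, by nlinarith, ?_⟩,
          ⟨9 - 4 * Real.sqrt 5, by nlinarith, ?_⟩, ?_, ?_⟩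
  · funext i
    fin_cases i <;>
      simp [M, v₁, Matrix.mulVec, dotProduct, Fin.sum_univ_three] <;> nlinarith [h5]
  · funext i
    fin_cases i <;>
      simp [M, v₂, Matrix.mulVec, dotProduct, Fin.sum_univ_three] <;> nlinarith [h5]
  · simp only [q, v₁]
    norm_num [Matrix.cons_val_zero, Matrix.cons_val_one, Matrix.cons_val_two]
    nlinarith [h5]
  · simp only [q, v₂]
    norm_num [Matrix.cons_val_zero, Matrix.cons_val_one, Matrix.cons_val_two]
    nlinarith [h5]
end

section
/- Let x′ > 0, λ < 0, y′ ∈ ℝ with 4(x′² + x′y′ − y′²) − 2λ² = −2, and set r′ = y′/x′. If 3x′ − y′ ≥ −2λ then x′²(9r′² − 14r′ + 1) ≥ 4; hence if (7 − 2√10)/9 < r′ < (7 + 2√10)/9 then 3x′ − y′ < −2λ. -/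
/-! On the conic `4(x² + xy − y²) − 2λ² = −2` the quantity `x²(9r² − 14r + 1) − 4`, with `r = y/x`,
is exactly `(3x − y)² − (2λ)²`. So `3x − y ≥ −2λ > 0` forces `x²(9r² − 14r + 1) ≥ 4`, which is
impossible when `r` lies strictly between the roots `(7 ± 2√10)/9` of `9r² − 14r + 1`. -/

lemma sq_mul_slope_quadratic_eq {x y l : ℝ} (hx : x ≠ 0)
    (heq : 4 * (x ^ 2 + x * y - y ^ 2) - 2 * l ^ 2 = -2) :
    x ^ 2 * (9 * (y / x) ^ 2 - 14 * (y / x) + 1) = (3 * x - y) ^ 2 - (-2 * l) ^ 2 + 4 := by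
  have hclear : x ^ 2 * (9 * (y / x) ^ 2 - 14 * (y / x) + 1) = 9 * y ^ 2 - 14 * x * y + x ^ 2 := by
    field_simp
  rw [hclear]
  linear_combination -2 * heq

lemma slope_quadratic_neg_of_mem_Ioo {r : ℝ} (h₁ : (7 - 2 * Real.sqrt 10) / 9 < r)
    (h₂ : r < (7 + 2 * Real.sqrt 10) / 9) : 9 * r ^ 2 - 14 * r + 1 < 0 := by
  have hsqrt : Real.sqrt 10 ^ 2 = 10 := Real.sq_sqrt (by norm_num)
  have hfactor : 9 * r ^ 2 - 14 * r + 1 =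
      9 * (r - (7 - 2 * Real.sqrt 10) / 9) * (r - (7 + 2 * Real.sqrt 10) / 9) := by
    linear_combination (4 / 9) * hsqrt
  rw [hfactor]
  exact mul_neg_of_pos_of_neg (by linarith) (by linarith)

/-- With `x′ > 0`, `λ < 0`, `4(x′² + x′y′ − y′²) − 2λ² = −2` and `r′ = y′/x′`:
if `3x′ − y′ ≥ −2λ` then `x′²(9r′² − 14r′ + 1) ≥ 4`; hence if
`(7 − 2√10)/9 < r′ < (7 + 2√10)/9` then `3x′ − y′ < −2λ`. -/
theorem iota1_slope_inequality (x' l y' r' : ℝ) (hx : 0 < x') (hl : l < 0)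
    (heq : 4 * (x' ^ 2 + x' * y' - y' ^ 2) - 2 * l ^ 2 = -2) (hr : r' = y' / x') :
    (-2 * l ≤ 3 * x' - y' → 4 ≤ x' ^ 2 * (9 * r' ^ 2 - 14 * r' + 1)) ∧
    ((7 - 2 * Real.sqrt 10) / 9 < r' → r' < (7 + 2 * Real.sqrt 10) / 9 →
      3 * x' - y' < -2 * l) := by
  have hsq : x' ^ 2 * (9 * r' ^ 2 - 14 * r' + 1) = (3 * x' - y') ^ 2 - (-2 * l) ^ 2 + 4 := by
    rw [hr]
    exact sq_mul_slope_quadratic_eq hx.ne' heq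
  have hfirst : -2 * l ≤ 3 * x' - y' → 4 ≤ x' ^ 2 * (9 * r' ^ 2 - 14 * r' + 1) := by
    intro h
    have := pow_le_pow_left₀ (by linarith : 0 ≤ -2 * l) h 2
    linarith
  refine ⟨hfirst, fun h₁ h₂ => ?_⟩
  by_contra! hc
  have hneg := mul_neg_of_pos_of_neg (pow_pos hx 2) (slope_quadratic_neg_of_mem_Ioo h₁ h₂)
  linarith [hfirst hc]
end

section
/- Let x′ > 0, λ < 0, y′ ∈ ℝ with 4(x′² + x′y′ − y′²) − 2λ² = −2, and set r′ = y′/x′. If 7x′ − 4y′ ≥ −2λ then x′²(24r′² − 64r′ + 41) ≥ 4; hence if (16 − √10)/12 < r′ < (16 + √10)/12 then 7x′ − 4y′ < −2λ. -/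
/-! Write `y′ = r′x′`. Since `λ < 0`, the inequality `−2λ ≤ 7x′ − 4y′` is between nonnegative
numbers and may be squared; eliminating `λ²` with the norm condition leaves
`41x′² − 64x′y′ + 24y′² ≥ 4`, which is `x′²(24r′² − 64r′ + 41) ≥ 4`. The quadratic
`24r² − 64r + 41` has roots `(16 ± √10)/12`, so it is negative strictly between them, where the
left side is then `≤ 0`. -/

lemma four_le_of_neg_two_mul_le {x y l : ℝ} (hl : l ≤ 0)
    (heq : 4 * (x ^ 2 + x * y - y ^ 2) - 2 * l ^ 2 = -2) (h : -2 * l ≤ 7 * x - 4 * y) :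
    4 ≤ 41 * x ^ 2 - 64 * x * y + 24 * y ^ 2 := by
  have hsq : (-2 * l) ^ 2 ≤ (7 * x - 4 * y) ^ 2 := pow_le_pow_left₀ (by linarith) h 2
  linear_combination hsq + 2 * heq

lemma sq_mul_quadratic_div_eq {x y : ℝ} (hx : x ≠ 0) :
    x ^ 2 * (24 * (y / x) ^ 2 - 64 * (y / x) + 41) = 41 * x ^ 2 - 64 * x * y + 24 * y ^ 2 := by
  field_simp
  ring

lemma quadratic_neg_of_mem_Ioo {r : ℝ} (hlo : (16 - √10) / 12 < r) (hhi : r < (16 + √10) / 12) :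
    24 * r ^ 2 - 64 * r + 41 < 0 := by
  have hfactor : 24 * r ^ 2 - 64 * r + 41
      = 24 * (r - (16 - √10) / 12) * (r - (16 + √10) / 12) := by
    linear_combination (1 / 6 : ℝ) * Real.sq_sqrt (show (0 : ℝ) ≤ 10 by norm_num)
  rw [hfactor]
  exact mul_neg_of_pos_of_neg (by linarith) (by linarith)

/-- With `x′ > 0`, `λ < 0`, `4(x′² + x′y′ − y′²) − 2λ² = −2` and `r′ = y′/x′`:
if `7x′ − 4y′ ≥ −2λ` then `x′²(24r′² − 64r′ + 41) ≥ 4`; hence if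
`(16 − √10)/12 < r′ < (16 + √10)/12` then `7x′ − 4y′ < −2λ`. -/
theorem iota2_slope_inequality (x' l y' r' : ℝ) (hx : 0 < x') (hl : l < 0)
    (heq : 4 * (x' ^ 2 + x' * y' - y' ^ 2) - 2 * l ^ 2 = -2) (hr : r' = y' / x') :
    (-2 * l ≤ 7 * x' - 4 * y' → 4 ≤ x' ^ 2 * (24 * r' ^ 2 - 64 * r' + 41)) ∧
    ((16 - Real.sqrt 10) / 12 < r' → r' < (16 + Real.sqrt 10) / 12 →
      7 * x' - 4 * y' < -2 * l) := by
  have hsquared : -2 * l ≤ 7 * x' - 4 * y' → 4 ≤ x' ^ 2 * (24 * r' ^ 2 - 64 * r' + 41) := by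
    intro h
    rw [hr, sq_mul_quadratic_div_eq hx.ne']
    exact four_le_of_neg_two_mul_le hl.le heq h
  refine ⟨hsquared, fun hlo hhi => ?_⟩
  by_contra! h
  have hneg : x' ^ 2 * (24 * r' ^ 2 - 64 * r' + 41) ≤ 0 :=
    mul_nonpos_of_nonneg_of_nonpos (sq_nonneg x') (quadratic_neg_of_mem_Ioo hlo hhi).le
  linarith [hsquared h]
end
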